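/- For f ∈ L²_loc(ℂⁿ), z ∈ ℂⁿ, r > 0, one has G_{2,r}(f)(z) ≤ MO_{2,r}(f)(z), and there is a constant C (independent of f, z, r) with MO_{2,r}(f)(z) ≤ C ( G_{2,r}(f)(z) + G_{2,r}(f̄)(z) ). Consequently BMO = BDA_* ∩ conj(BDA_*) with equivalence of norms ‖f‖_* ≍ ‖f‖_{BDA_*} + ‖f̄‖_{BDA_*}. -/

import Mathlib

/-!
Taking the constant `⨍ f` as the holomorphic competitor gives `G ≤ MO`. Conversely, let `h₁` and
`h₂` be holomorphic on `B(z,r)` with `f ≈ h₁` and `f̄ ≈ h₂` in `L²`. The mean value property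
(circle averages in every complex line through `z`, combined by Fubini) shows that `h₁ - h₁ z` and
`(h₁ - h₁ z) (h₂ - h₂ z)` have integral zero over the ball, so `h₁ - h₁ z` is orthogonal to
`c - conj (h₂ - h₂ z)` for every constant `c`. By Pythagoras,
`‖h₁ - h₁ z‖ ≤ ‖h₁ - h̄₂‖ ≤ ‖f - h₁‖ + ‖f̄ - h₂‖`, and since the mean is the best constant in `L²`,
`‖f - ⨍ f‖ ≤ ‖f - h₁ z‖ ≤ 2 ‖f - h₁‖ + ‖f̄ - h₂‖`. Hence `MO ≤ 2 (G f + G f̄)`, and since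
`MO f̄ = MO f` the description of `BMO` follows by taking suprema.
-/

open MeasureTheory Metric Complex Filter
open scoped ENNReal NNReal Topology

noncomputable section

variable {E : Type*} [NormedAddCommGroup E] [InnerProductSpace ℂ E] [FiniteDimensional ℂ E]
  [MeasurableSpace E] [BorelSpace E]

instance : InnerProductSpace ℝ E := InnerProductSpace.rclikeToReal ℂ E

/-- `G_{q,r}(f)(z)`: integral distance to holomorphic functions on `B(z,r)`. -/
def G (q r : ℝ) (f : E → ℂ) (z : E) : ℝ≥0∞ :=
  ⨅ h : {h : E → ℂ // DifferentiableOn ℂ h (ball z r)},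
    ((volume (ball z r))⁻¹ * ∫⁻ w in ball z r, (‖f w - h.1 w‖₊ : ℝ≥0∞) ^ q) ^ (1/q)

/-- membership in `L^q_loc`. -/
def LocLq (q : ℝ) (f : E → ℂ) : Prop :=
  ∀ (z : E) (r : ℝ), 0 < r → MemLp f (ENNReal.ofReal q) (volume.restrict (ball z r))

/-- The mean oscillation `MO_{2,r}(f)(z)` over the ball `B(z,r)`. -/
def MO (r : ℝ) (f : E → ℂ) (z : E) : ℝ≥0∞ :=
  ((volume (ball z r))⁻¹ *
      ∫⁻ w in ball z r, (‖f w - ⨍ u in ball z r, f u‖₊ : ℝ≥0∞) ^ (2 : ℝ)) ^ (1/2 : ℝ)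

open Set Real
open scoped ComplexConjugate InnerProductSpace

section L2

variable {α : Type*} [MeasurableSpace α] {μ : Measure α}

theorem eLpNorm_le_eLpNorm_add_of_integral_mul_conj_eq_zero {u w : α → ℂ} (hu : MemLp u 2 μ)
    (hw : MemLp w 2 μ) (h : ∫ x, u x * conj (w x) ∂μ = 0) :
    eLpNorm u 2 μ ≤ eLpNorm (u + w) 2 μ := by
  have horth : ⟪hu.toLp u, hw.toLp w⟫_ℂ = 0 := by
    refine inner_eq_zero_symm.1 ((L2.inner_def _ _).trans ((integral_congr_ae ?_).trans h))
    filter_upwards [hu.coeFn_toLp, hw.coeFn_toLp] with x hux hwx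
    rw [RCLike.inner_apply, hux, hwx, mul_comm]
  have hpyth := norm_add_sq_eq_norm_sq_add_norm_sq_of_inner_eq_zero _ _ horth
  rw [← Lp.enorm_toLp hu, ← Lp.enorm_toLp (hu.add hw), MemLp.toLp_add, ← ofReal_norm,
    ← ofReal_norm]
  refine ENNReal.ofReal_le_ofReal ((mul_self_le_mul_self_iff (norm_nonneg _) (norm_nonneg _)).2 ?_)
  exact hpyth ▸ le_add_of_nonneg_right (mul_self_nonneg _)

theorem eLpNorm_sub_average_le [IsFiniteMeasure μ] {g : α → ℂ} (hg : MemLp g 2 μ) (c : ℂ) :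
    eLpNorm (fun x => g x - ⨍ y, g y ∂μ) 2 μ ≤ eLpNorm (fun x => g x - c) 2 μ := by
  have h := eLpNorm_le_eLpNorm_add_of_integral_mul_conj_eq_zero
    (u := fun x => g x - ⨍ y, g y ∂μ) (hg.sub (memLp_const _)) (memLp_const ((⨍ y, g y ∂μ) - c))
    (by rw [integral_mul_const, integral_sub_average, zero_mul])
  convert h using 2
  ext x
  simp only [Pi.add_apply]
  ring

theorem MeasureTheory.MemLp.of_eLpNorm_sub_lt_top {F : Type*} [NormedAddCommGroup F] {p : ℝ≥0∞}
    {f g : α → F} (hf : MemLp f p μ) (hg : AEStronglyMeasurable g μ)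
    (hfg : eLpNorm (f - g) p μ < ∞) :
    MemLp g p μ := by
  simpa using hf.sub ⟨hf.1.sub hg, hfg⟩

theorem inv_mul_setLIntegral_rpow_two_rpow_half_eq {F : Type*} [NormedAddCommGroup F] (s : Set α)
    (f : α → F) :
    ((μ s)⁻¹ * ∫⁻ x in s, (‖f x‖₊ : ℝ≥0∞) ^ (2 : ℝ) ∂μ) ^ (1 / (2 : ℝ)) =
      (μ s)⁻¹ ^ (1 / (2 : ℝ)) * eLpNorm f 2 (μ.restrict s) := by
  rw [eLpNorm_eq_lintegral_rpow_enorm_toReal two_ne_zero ENNReal.ofNat_ne_top,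
    ENNReal.mul_rpow_of_nonneg _ _ (by norm_num), ENNReal.toReal_ofNat]
  rfl

end L2

section MeanValue

variable {V : Type*} [NormedAddCommGroup V]

theorem DifferentiableOn.integral_cexp_mul_I_smul [NormedSpace ℂ V] {H : V → ℂ} {r : ℝ}
    (hd : DifferentiableOn ℂ H (ball 0 r)) {w : V} (hw : w ∈ ball (0 : V) r) :
    ∫ θ in 0..2 * π, H (cexp (θ * I) • w) = (2 * π : ℝ) • H 0 := by
  have hdisc : DiffContOnCl ℂ (fun c : ℂ => H (c • w)) (ball 0 |1|) := by
    refine DifferentiableOn.diffContOnCl (hd.comp (differentiable_id.smul_const w).differentiableOn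
      fun c hc => ?_)
    rw [abs_one, closure_ball _ one_ne_zero, mem_closedBall_zero_iff] at hc
    rw [mem_ball_zero_iff] at hw ⊢
    calc ‖c • w‖ = ‖c‖ * ‖w‖ := norm_smul c w
      _ ≤ ‖w‖ := mul_le_of_le_one_left (norm_nonneg w) hc
      _ < r := hw
  have := hdisc.circleAverage
  rw [circleAverage_def, zero_smul] at this
  rw [← this, smul_smul, mul_inv_cancel₀ (by positivity), one_smul]
  simp [circleMap]

variable [InnerProductSpace ℂ V] [FiniteDimensional ℂ V] [MeasurableSpace V] [BorelSpace V]

def LinearIsometryEquiv.smulOfNormEqOne (c : ℂ) (hc : ‖c‖ = 1) : V ≃ₗᵢ[ℝ] V where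
  toLinearEquiv := (LinearEquiv.smulOfNeZero ℂ V c (by rintro rfl; simp at hc)).restrictScalars ℝ
  norm_map' w := by simp [norm_smul, hc]

theorem measurePreserving_smul_ball {c : ℂ} (hc : ‖c‖ = 1) (r : ℝ) :
    MeasurePreserving (c • · : V → V) (volume.restrict (ball 0 r))
      (volume.restrict (ball 0 r)) := by
  have hpre : (c • · : V → V) ⁻¹' ball 0 r = ball 0 r := by
    ext w; simp [norm_smul, hc]
  have := (LinearIsometryEquiv.smulOfNormEqOne c hc).measurePreserving.restrict_preimage
    (measurableSet_ball (x := (0 : V)) (ε := r))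
  rwa [show ⇑(LinearIsometryEquiv.smulOfNormEqOne c hc) ⁻¹' ball (0 : V) r = ball 0 r from hpre]
    at this

theorem DifferentiableOn.setIntegral_ball_zero {H : V → ℂ} {r : ℝ}
    (hd : DifferentiableOn ℂ H (ball 0 r)) (hi : IntegrableOn H (ball 0 r)) :
    ∫ w in ball 0 r, H w = volume.real (ball (0 : V) r) • H 0 := by
  set μ : Measure ℝ := volume.restrict (Ioc 0 (2 * π))
  set ν : Measure V := volume.restrict (ball 0 r)
  have hT : MeasurePreserving (fun p : ℝ × V => (p.1, cexp (p.1 * I) • p.2))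
      (μ.prod ν) (μ.prod ν) :=
    (MeasurePreserving.id μ).skew_product (by fun_prop)
      (ae_of_all _ fun θ => (measurePreserving_smul_ball (norm_exp_ofReal_mul_I θ) r).map_eq)
  -- Integrate `H (e^{iθ} w)` over `(θ, w)` in both orders: in `w` the rotation leaves the ball
  -- invariant, in `θ` the circle mean value property applies.
  have hH : Integrable (fun p : ℝ × V => H p.2) (μ.prod ν) := hi.comp_snd μ
  have hrot : ∫ p, H (cexp (p.1 * I) • p.2) ∂(μ.prod ν) = ∫ p, H p.2 ∂(μ.prod ν) := by
    conv_rhs => rw [← hT.map_eq]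
    refine (integral_map (f := fun p : ℝ × V => H p.2) hT.measurable.aemeasurable ?_).symm
    rw [hT.map_eq]
    exact hH.aestronglyMeasurable
  have hΦ : Integrable (fun p : ℝ × V => H (cexp (p.1 * I) • p.2)) (μ.prod ν) :=
    (hT.integrable_comp hH.aestronglyMeasurable).2 hH
  have hcircle : ∀ w ∈ ball (0 : V) r, ∫ θ, H (cexp (θ * I) • w) ∂μ = (2 * π : ℝ) • H 0 := by
    intro w hw
    rw [← intervalIntegral.integral_of_le (by positivity), hd.integral_cexp_mul_I_smul hw]
  rw [integral_prod_symm _ hΦ, integral_fun_snd,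
    setIntegral_congr_fun measurableSet_ball hcircle, setIntegral_const, smul_comm] at hrot
  have hμ : μ.real univ = 2 * π := by simp [μ, Real.pi_pos.le]
  rw [hμ] at hrot
  exact (smul_right_injective ℂ (by positivity : (2 * π : ℝ) ≠ 0) hrot).symm

theorem DifferentiableOn.setIntegral_ball {H : V → ℂ} {z : V} {r : ℝ}
    (hd : DifferentiableOn ℂ H (ball z r)) (hi : IntegrableOn H (ball z r)) :
    ∫ w in ball z r, H w = volume.real (ball z r) • H z := by
  have hpre : (z + ·) ⁻¹' ball z r = ball 0 r := by ext; simp [dist_eq_norm]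
  have ht : MeasurePreserving (z + ·) (volume.restrict (ball 0 r)) (volume.restrict (ball z r)) :=
    hpre ▸ (measurePreserving_add_left volume z).restrict_preimage measurableSet_ball
  have he := (Homeomorph.addLeft z).measurableEmbedding
  have hd₀ : DifferentiableOn ℂ (fun u => H (z + u)) (ball 0 r) :=
    hd.comp (by fun_prop) (hpre ▸ mapsTo_preimage _ _)
  rw [← ht.integral_comp he, hd₀.setIntegral_ball_zero ((ht.integrable_comp_emb he).2 hi), add_zero,
    measureReal_def, measureReal_def, Measure.addHaar_ball_center volume z r]

instance isFiniteMeasure_restrict_ball (z : V) (r : ℝ) :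
    IsFiniteMeasure (volume.restrict (ball z r)) :=
  isFiniteMeasure_restrict.2 measure_ball_lt_top.ne

theorem eLpNorm_sub_center_le_eLpNorm_sub_conj {h₁ h₂ : V → ℂ} {z : V} {r : ℝ}
    (hd₁ : DifferentiableOn ℂ h₁ (ball z r)) (hd₂ : DifferentiableOn ℂ h₂ (ball z r))
    (hm₁ : MemLp h₁ 2 (volume.restrict (ball z r)))
    (hm₂ : MemLp h₂ 2 (volume.restrict (ball z r))) :
    eLpNorm (fun w => h₁ w - h₁ z) 2 (volume.restrict (ball z r)) ≤
      eLpNorm (fun w => h₁ w - conj (h₂ w)) 2 (volume.restrict (ball z r)) := by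
  set u := fun w => h₁ w - h₁ z
  set v := fun w => h₂ w - h₂ z
  have hu : MemLp u 2 (volume.restrict (ball z r)) := hm₁.sub (memLp_const _)
  have hv : MemLp v 2 (volume.restrict (ball z r)) := hm₂.sub (memLp_const _)
  have huv : Integrable (fun w => u w * v w) (volume.restrict (ball z r)) := hu.integrable_mul hv
  have hu₀ : ∫ w in ball z r, u w = 0 := by
    simpa [u] using (hd₁.sub_const (h₁ z)).setIntegral_ball (hu.integrable one_le_two)
  have huv₀ : ∫ w in ball z r, u w * v w = 0 := by
    simpa [u, v] using ((hd₁.sub_const (h₁ z)).mul (hd₂.sub_const (h₂ z))).setIntegral_ball huv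
  have hsplit : (fun w => h₁ w - conj (h₂ w)) = u + fun w => h₁ z - conj (h₂ z) - conj (v w) := by
    ext w
    simp only [Pi.add_apply, u, v, map_sub]
    ring
  rw [hsplit]
  refine eLpNorm_le_eLpNorm_add_of_integral_mul_conj_eq_zero hu ((memLp_const _).sub hv.star) ?_
  have hexpand : ∀ w, u w * conj (h₁ z - conj (h₂ z) - conj (v w)) =
      conj (h₁ z - conj (h₂ z)) * u w - u w * v w := fun w => by
    simp only [map_sub, Complex.conj_conj]
    ring
  simp_rw [hexpand]
  rw [integral_sub ((hu.integrable one_le_two).const_mul _) huv, integral_const_mul, hu₀, huv₀,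
    mul_zero, sub_zero]

theorem eLpNorm_sub_setAverage_le_of_differentiableOn {f h₁ h₂ : V → ℂ} {z : V} {r : ℝ}
    (hf : MemLp f 2 (volume.restrict (ball z r)))
    (hd₁ : DifferentiableOn ℂ h₁ (ball z r)) (hd₂ : DifferentiableOn ℂ h₂ (ball z r)) :
    eLpNorm (fun w => f w - ⨍ u in ball z r, f u) 2 (volume.restrict (ball z r)) ≤
      2 * (eLpNorm (fun w => f w - h₁ w) 2 (volume.restrict (ball z r)) +
        eLpNorm (fun w => conj (f w) - h₂ w) 2 (volume.restrict (ball z r))) := by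
  set ν := volume.restrict (ball z r)
  set N₁ := eLpNorm (fun w => f w - h₁ w) 2 ν
  set N₂ := eLpNorm (fun w => conj (f w) - h₂ w) 2 ν
  have ha₁ : AEStronglyMeasurable h₁ ν := hd₁.continuousOn.aestronglyMeasurable measurableSet_ball
  have ha₂ : AEStronglyMeasurable h₂ ν := hd₂.continuousOn.aestronglyMeasurable measurableSet_ball
  rcases eq_top_or_lt_top N₁ with hN₁ | hN₁
  · simp [hN₁]
  rcases eq_top_or_lt_top N₂ with hN₂ | hN₂
  · simp [hN₂]
  have hm₁ : MemLp h₁ 2 ν := hf.of_eLpNorm_sub_lt_top ha₁ hN₁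
  have hm₂ : MemLp h₂ 2 ν := hf.star.of_eLpNorm_sub_lt_top ha₂ hN₂
  calc eLpNorm (fun w => f w - ⨍ u in ball z r, f u) 2 ν
      ≤ eLpNorm (fun w => f w - h₁ z) 2 ν := eLpNorm_sub_average_le hf (h₁ z)
    _ = eLpNorm ((fun w => f w - h₁ w) + fun w => h₁ w - h₁ z) 2 ν := by
        congr 1; ext w; simp
    _ ≤ N₁ + eLpNorm (fun w => h₁ w - h₁ z) 2 ν :=
        eLpNorm_add_le (hf.1.sub ha₁) (ha₁.sub aestronglyMeasurable_const) one_le_two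
    _ ≤ N₁ + eLpNorm (fun w => h₁ w - conj (h₂ w)) 2 ν := by
        gcongr
        exact eLpNorm_sub_center_le_eLpNorm_sub_conj hd₁ hd₂ hm₁ hm₂
    _ = N₁ + eLpNorm (star (fun w => conj (f w) - h₂ w) - fun w => f w - h₁ w) 2 ν := by
        congr 2; ext w; simp
    _ ≤ N₁ + (N₂ + N₁) := by
        gcongr
        exact (eLpNorm_sub_le (hf.1.star.sub ha₂).star (hf.1.sub ha₁) one_le_two).trans_eq
          (by rw [eLpNorm_star]; rfl)
    _ ≤ 2 * (N₁ + N₂) := by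
        rw [two_mul, add_comm N₂ N₁]
        exact add_le_add le_self_add le_rfl

end MeanValue

theorem MO_eq (f : E → ℂ) (z : E) (r : ℝ) :
    MO r f z = (volume (ball z r))⁻¹ ^ (1 / (2 : ℝ)) *
      eLpNorm (fun w => f w - ⨍ u in ball z r, f u) 2 (volume.restrict (ball z r)) :=
  inv_mul_setLIntegral_rpow_two_rpow_half_eq _ (fun w => f w - ⨍ u in ball z r, f u)

theorem G_two_eq (f : E → ℂ) (z : E) (r : ℝ) :
    G 2 r f z = ⨅ h : {h : E → ℂ // DifferentiableOn ℂ h (ball z r)},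
      (volume (ball z r))⁻¹ ^ (1 / (2 : ℝ)) *
        eLpNorm (fun w => f w - h.1 w) 2 (volume.restrict (ball z r)) := by
  refine iInf_congr fun h => ?_
  exact inv_mul_setLIntegral_rpow_two_rpow_half_eq _ (fun w => f w - h.1 w)

theorem G_two_le_MO (f : E → ℂ) (z : E) (r : ℝ) : G 2 r f z ≤ MO r f z :=
  iInf_le_of_le ⟨fun _ => ⨍ u in ball z r, f u, differentiableOn_const _⟩ le_rfl

theorem MO_le_two_mul_G_add_G_conj {f : E → ℂ} {z : E} {r : ℝ}
    (hf : MemLp f 2 (volume.restrict (ball z r))) :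
    MO r f z ≤ 2 * (G 2 r f z + G 2 r (fun w => conj (f w)) z) := by
  rw [MO_eq, G_two_eq, G_two_eq, mul_add, ENNReal.mul_iInf_of_ne two_ne_zero ENNReal.ofNat_ne_top,
    ENNReal.mul_iInf_of_ne two_ne_zero ENNReal.ofNat_ne_top]
  refine ENNReal.le_iInf_add_iInf fun h₁ h₂ => ?_
  calc _ ≤ (volume (ball z r))⁻¹ ^ (1 / (2 : ℝ)) *
        (2 * (eLpNorm (fun w => f w - h₁.1 w) 2 (volume.restrict (ball z r)) +
          eLpNorm (fun w => conj (f w) - h₂.1 w) 2 (volume.restrict (ball z r)))) := by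
        gcongr
        exact eLpNorm_sub_setAverage_le_of_differentiableOn hf h₁.2 h₂.2
    _ = _ := by ring

theorem MO_conj (f : E → ℂ) (z : E) (r : ℝ) : MO r (fun w => conj (f w)) z = MO r f z := by
  have havg : ⨍ u in ball z r, conj (f u) = conj (⨍ u in ball z r, f u) := by
    simp [setAverage_eq, integral_conj, Complex.real_smul]
  rw [MO_eq, MO_eq, havg]
  congr 1
  exact eLpNorm_congr_norm_ae (.of_forall fun w => by simp [← map_sub])

/-- `G_{2,r}(f) ≤ MO_{2,r}(f) ≤ C (G_{2,r}(f) + G_{2,r}(f̄))` uniformly; consequently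
`BMO = BDA_* ∩ conj(BDA_*)`. -/
theorem stmt16 :
    ∃ C : ℝ≥0∞, 0 < C ∧ C ≠ ⊤ ∧
      (∀ f : E → ℂ, LocLq 2 f → ∀ (z : E) (r : ℝ), 0 < r →
        G 2 r f z ≤ MO r f z ∧
        MO r f z ≤ C * (G 2 r f z + G 2 r (fun w => (starRingEnd ℂ) (f w)) z)) ∧
      (∀ f : E → ℂ, LocLq 2 f →
        ((⨆ z : E, ⨆ r : ℝ, ⨆ _ : 0 < r, MO r f z) < ⊤ ↔
          (⨆ z : E, ⨆ r : ℝ, ⨆ _ : 0 < r, G 2 r f z) < ⊤ ∧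
          (⨆ z : E, ⨆ r : ℝ, ⨆ _ : 0 < r,
            G 2 r (fun w => (starRingEnd ℂ) (f w)) z) < ⊤)) := by
  have hMO : ∀ f : E → ℂ, LocLq 2 f → ∀ (z : E) (r : ℝ), 0 < r →
      MO r f z ≤ 2 * (G 2 r f z + G 2 r (fun w => conj (f w)) z) := fun f hf z r hr =>
    MO_le_two_mul_G_add_G_conj (by simpa using hf z r hr)
  refine ⟨2, by norm_num, by norm_num, fun f hf z r hr => ⟨G_two_le_MO f z r, hMO f hf z r hr⟩,
    fun f hf => ⟨fun hsup => ⟨?_, ?_⟩, fun ⟨hsup₁, hsup₂⟩ => ?_⟩⟩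
  · exact (iSup_mono fun z => iSup₂_mono fun r _ => G_two_le_MO f z r).trans_lt hsup
  · refine (iSup_mono fun z => iSup₂_mono fun r _ => ?_).trans_lt hsup
    exact (G_two_le_MO _ z r).trans_eq (MO_conj f z r)
  · have hbound : ∀ z r, 0 < r → MO r f z ≤ 2 * ((⨆ z : E, ⨆ r : ℝ, ⨆ _ : 0 < r, G 2 r f z) +
        ⨆ z : E, ⨆ r : ℝ, ⨆ _ : 0 < r, G 2 r (fun w => conj (f w)) z) := fun z r hr =>
      (hMO f hf z r hr).trans (by gcongr <;> exact le_iSup_of_le z (le_iSup₂_of_le r hr le_rfl))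
    exact (iSup_le fun z => iSup₂_le (hbound z)).trans_lt
      (ENNReal.mul_lt_top (by norm_num) (ENNReal.add_lt_top.2 ⟨hsup₁, hsup₂⟩))
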